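/- arXiv:1807.03700 — 2 statements merged into one kernel-verified Lean document; each statement's English description precedes it below -/
import Mathlib

section
/- Let B ≠ 0 and u(x,t) be a solution of the heat equation ∂u/∂t = (1/2)∂²u/∂x². Suppose θ: ℝ → ℝ is twice differentiable with θ''(x) = (4Bx + 2C)θ(x). Then v(x,t) = θ(x)·exp((2B²/3)t³ − Ct − 2Bxt)·u(x − Bt², t) satisfies ∂v/∂t = (1/2)∂²v/∂x² − ∂/∂x(μ(x)v) wherever θ(x) ≠ 0, where μ(x) = θ'(x)/θ(x). -/
/-!
Write `v = θ w`. Since `μ = θ'/θ`, the product rule collapses the Fokker–Planck operator to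
`(1/2) (θ w)'' - (θ' w)' = θ ((1/2) w'' - (1/2) (θ''/θ) w)`, and `θ''/θ = 4Bx + 2C`, so it
suffices that `w = exp (2B²t³/3 - Ct - 2Bxt) u (x - Bt², t)` solves
`w_t = (1/2) w_xx - (2Bx + C) w`. That is a direct computation from the heat equation for `u`
in the accelerated frame `x - Bt²`: the exponential factor absorbs the Galilean drift terms.
-/

open Real

noncomputable def fokkerPlanckOp (μ f : ℝ → ℝ) (x : ℝ) : ℝ :=
  (1 / 2) * deriv (deriv f) x - deriv (fun y => μ y * f y) x

section ProductRule

variable {θ w : ℝ → ℝ}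

theorem deriv_deriv_mul (hθ : ContDiff ℝ 2 θ) (hw : ContDiff ℝ 2 w) (x : ℝ) :
    deriv (deriv fun y => θ y * w y) x
      = deriv (deriv θ) x * w x + 2 * (deriv θ x * deriv w x) + θ x * deriv (deriv w) x := by
  have hθ₁ := hθ.differentiable two_ne_zero
  have hw₁ := hw.differentiable two_ne_zero
  have hfirst : deriv (fun y => θ y * w y) = fun y => deriv θ y * w y + θ y * deriv w y :=
    funext fun y => deriv_fun_mul (hθ₁ y) (hw₁ y)
  rw [hfirst, deriv_fun_add, deriv_fun_mul, deriv_fun_mul]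
  · ring
  all_goals fun_prop

theorem fokkerPlanckOp_logDeriv_mul (hθ : ContDiff ℝ 2 θ) (hw : ContDiff ℝ 2 w) {x : ℝ}
    (hx : θ x ≠ 0) :
    fokkerPlanckOp (logDeriv θ) (fun y => θ y * w y) x
      = (1 / 2) * (θ x * deriv (deriv w) x - deriv (deriv θ) x * w x) := by
  have hdrift : (fun y => logDeriv θ y * (θ y * w y)) =ᶠ[nhds x] fun y => deriv θ y * w y := by
    filter_upwards [hθ.continuous.continuousAt.eventually_ne hx] with y hy
    rw [logDeriv_apply]
    field_simp
  rw [fokkerPlanckOp, hdrift.deriv_eq, deriv_deriv_mul hθ hw,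
    deriv_fun_mul (hθ.differentiable_deriv_two x) (hw.differentiable two_ne_zero x)]
  ring

end ProductRule

section ExpAffine

variable {h : ℝ → ℝ} (a k : ℝ)

theorem deriv_exp_affine_mul (hh : Differentiable ℝ h) :
    deriv (fun y => exp (a + k * y) * h y) = fun y => exp (a + k * y) * (k * h y + deriv h y) := by
  funext y
  have hexp : HasDerivAt (fun y => exp (a + k * y)) (exp (a + k * y) * k) y := by
    simpa using ((hasDerivAt_id y).const_mul k |>.const_add a).exp
  rw [(hexp.fun_mul (hh y).hasDerivAt).deriv]
  ring

theorem deriv_deriv_exp_affine_mul (hh : ContDiff ℝ 2 h) (y : ℝ) :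
    deriv (deriv fun y => exp (a + k * y) * h y) y
      = exp (a + k * y) * (k ^ 2 * h y + 2 * k * deriv h y + deriv (deriv h) y) := by
  have hh₁ := hh.differentiable two_ne_zero
  have hh₂ := hh.differentiable_deriv_two
  rw [deriv_exp_affine_mul a k hh₁, deriv_exp_affine_mul a k (by fun_prop)]
  beta_reduce
  rw [deriv_fun_add (by fun_prop) (hh₂ y), deriv_const_mul _ (hh₁ y)]
  ring

end ExpAffine

theorem hasDerivAt_comp_uncurry {u : ℝ → ℝ → ℝ} {r q : ℝ → ℝ} {r' q' s : ℝ}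
    (hu : DifferentiableAt ℝ (Function.uncurry u) (r s, q s))
    (hr : HasDerivAt r r' s) (hq : HasDerivAt q q' s) :
    HasDerivAt (fun s => u (r s) (q s))
      (deriv (fun y => u y (q s)) (r s) * r' + deriv (fun τ => u (r s) τ) (q s) * q') s := by
  set L := fderiv ℝ (Function.uncurry u) (r s, q s)
  have hL := hu.hasFDerivAt
  have hx : deriv (fun y => u y (q s)) (r s) = L (1, 0) :=
    (hL.comp_hasDerivAt (f := fun y => (y, q s)) (r s)
      ((hasDerivAt_id _).prodMk (hasDerivAt_const _ _))).deriv
  have ht : deriv (fun τ => u (r s) τ) (q s) = L (0, 1) :=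
    (hL.comp_hasDerivAt (f := fun τ => (r s, τ)) (q s)
      ((hasDerivAt_const _ _).prodMk (hasDerivAt_id _))).deriv
  have hsplit : ((r', q') : ℝ × ℝ) = r' • ((1 : ℝ), (0 : ℝ)) + q' • ((0 : ℝ), (1 : ℝ)) := by
    simp
  refine (hL.comp_hasDerivAt (f := fun s => (r s, q s)) s (hr.prodMk hq)).congr_deriv ?_
  rw [hx, ht, hsplit, map_add, map_smul, map_smul, smul_eq_mul, smul_eq_mul]
  ring

theorem ContDiff.uncurry_comp_sub_const {n : WithTop ℕ∞} {u : ℝ → ℝ → ℝ}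
    (hu : ContDiff ℝ n (Function.uncurry u)) (c t : ℝ) : ContDiff ℝ n fun x => u (x - c) t :=
  hu.comp ((contDiff_id.sub contDiff_const).prodMk contDiff_const)

noncomputable def linearPotentialTransform (B C : ℝ) (u : ℝ → ℝ → ℝ) (x t : ℝ) : ℝ :=
  exp (2 * B ^ 2 / 3 * t ^ 3 - C * t + -(2 * B * t) * x) * u (x - B * t ^ 2) t

section LinearPotentialTransform

variable {u : ℝ → ℝ → ℝ} (B C : ℝ)

theorem contDiff_linearPotentialTransform_left (hu : ContDiff ℝ 2 (Function.uncurry u)) (t : ℝ) :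
    ContDiff ℝ 2 fun x => linearPotentialTransform B C u x t := by
  have hslice := hu.uncurry_comp_sub_const (B * t ^ 2) t
  unfold linearPotentialTransform
  fun_prop

theorem deriv_deriv_linearPotentialTransform_left (hu : ContDiff ℝ 2 (Function.uncurry u))
    (x t : ℝ) :
    deriv (deriv fun y => linearPotentialTransform B C u y t) x
      = exp (2 * B ^ 2 / 3 * t ^ 3 - C * t + -(2 * B * t) * x)
        * (4 * B ^ 2 * t ^ 2 * u (x - B * t ^ 2) t
          - 4 * B * t * deriv (fun y => u y t) (x - B * t ^ 2)
          + deriv (deriv fun y => u y t) (x - B * t ^ 2)) := by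
  have hshift : deriv (fun y => u (y - B * t ^ 2) t)
      = fun y => deriv (fun y => u y t) (y - B * t ^ 2) :=
    funext fun y => deriv_comp_sub_const (fun y => u y t) _ y
  unfold linearPotentialTransform
  rw [deriv_deriv_exp_affine_mul _ _ (hu.uncurry_comp_sub_const (B * t ^ 2) t), hshift,
    deriv_comp_sub_const]
  ring

theorem deriv_linearPotentialTransform_right (hu : ContDiff ℝ 2 (Function.uncurry u))
    (x t : ℝ) :
    deriv (fun s => linearPotentialTransform B C u x s) t
      = exp (2 * B ^ 2 / 3 * t ^ 3 - C * t + -(2 * B * t) * x)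
        * ((2 * B ^ 2 * t ^ 2 - C - 2 * B * x) * u (x - B * t ^ 2) t
          - 2 * B * t * deriv (fun y => u y t) (x - B * t ^ 2)
          + deriv (fun s => u (x - B * t ^ 2) s) t) := by
  have hphase : HasDerivAt (fun s => 2 * B ^ 2 / 3 * s ^ 3 - C * s + -(2 * B * s) * x)
      (2 * B ^ 2 * t ^ 2 - C - 2 * B * x) t := by
    refine ((((hasDerivAt_pow 3 t).const_mul (2 * B ^ 2 / 3)).fun_sub
      ((hasDerivAt_id' t).const_mul C)).fun_add
      (((hasDerivAt_id' t).const_mul (2 * B)).fun_neg.mul_const x)).congr_deriv ?_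
    push_cast
    ring
  have hframe : HasDerivAt (fun s => x - B * s ^ 2) (-(2 * B * t)) t := by
    refine (((hasDerivAt_pow 2 t).const_mul B).const_sub x).congr_deriv ?_
    push_cast
    ring
  have hu' := hasDerivAt_comp_uncurry ((hu.differentiable two_ne_zero) _) hframe (hasDerivAt_id' t)
  unfold linearPotentialTransform
  rw [(hphase.exp.fun_mul hu').deriv]
  ring

theorem linearPotentialTransform_heat (hu : ContDiff ℝ 2 (Function.uncurry u))
    (hheat : ∀ x t : ℝ, deriv (fun s => u x s) t = (1 / 2) * deriv (deriv (fun y => u y t)) x)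
    (x t : ℝ) :
    deriv (fun s => linearPotentialTransform B C u x s) t
      = (1 / 2) * deriv (deriv fun y => linearPotentialTransform B C u y t) x
        - (2 * B * x + C) * linearPotentialTransform B C u x t := by
  rw [deriv_linearPotentialTransform_right B C hu, deriv_deriv_linearPotentialTransform_left B C hu,
    hheat, linearPotentialTransform]
  ring

end LinearPotentialTransform

theorem F1_to_heat_intertwining_general
    (B C : ℝ)
    (u : ℝ → ℝ → ℝ) (θ : ℝ → ℝ)
    (hu : ContDiff ℝ 2 (Function.uncurry u))
    (hθ : ContDiff ℝ 2 θ)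
    (hheat : ∀ x t : ℝ,
      deriv (fun s => u x s) t = (1/2) * deriv (deriv (fun y => u y t)) x)
    (hODE : ∀ x : ℝ, deriv (deriv θ) x = (4 * B * x + 2 * C) * θ x) :
    let v : ℝ → ℝ → ℝ := fun x t =>
      θ x * Real.exp (2 * B ^ 2 / 3 * t ^ 3 - C * t - 2 * B * x * t) * u (x - B * t ^ 2) t
    let μ : ℝ → ℝ := fun x => deriv θ x / θ x
    ∀ x t : ℝ, θ x ≠ 0 →
      deriv (fun s => v x s) t
        = (1/2) * deriv (deriv (fun y => v y t)) x
          - deriv (fun y => μ y * v y t) x := by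
  intro v μ x t hx
  set w := linearPotentialTransform B C u
  have hv : ∀ y s, v y s = θ y * w y s := by
    intro y s
    simp only [v, w, linearPotentialTransform]
    rw [show 2 * B ^ 2 / 3 * s ^ 3 - C * s - 2 * B * y * s
        = 2 * B ^ 2 / 3 * s ^ 3 - C * s + -(2 * B * s) * y by ring]
    ring
  calc deriv (fun s => v x s) t = θ x * deriv (fun s => w x s) t := by
        simp only [hv, deriv_const_mul_field']
    _ = (1 / 2) * (θ x * deriv (deriv fun y => w y t) x - deriv (deriv θ) x * w x t) := by
        rw [linearPotentialTransform_heat B C hu hheat, hODE]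
        ring
    _ = fokkerPlanckOp (logDeriv θ) (fun y => θ y * w y t) x :=
        (fokkerPlanckOp_logDeriv_mul hθ (contDiff_linearPotentialTransform_left B C hu t) hx).symm
    _ = _ := by simp only [← hv]; rfl

/-- Intertwining of the family F₁ Fokker–Planck equation with the heat equation:
v(x,t) = θ(x) exp((2B²/3)t³ − Ct − 2Bxt) u(x − Bt², t) solves
v_t = (1/2)v_xx − (μ v)_x with μ = θ'/θ wherever θ ≠ 0. -/
theorem F1_to_heat_intertwining
    (B C : ℝ) (hB : B ≠ 0)
    (u : ℝ → ℝ → ℝ) (θ : ℝ → ℝ)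
    (hu : ContDiff ℝ 2 (Function.uncurry u))
    (hθ : ContDiff ℝ 2 θ)
    (hheat : ∀ x t : ℝ,
      deriv (fun s => u x s) t = (1/2) * deriv (deriv (fun y => u y t)) x)
    (hODE : ∀ x : ℝ, deriv (deriv θ) x = (4 * B * x + 2 * C) * θ x) :
    let v : ℝ → ℝ → ℝ := fun x t =>
      θ x * Real.exp (2 * B ^ 2 / 3 * t ^ 3 - C * t - 2 * B * x * t) * u (x - B * t ^ 2) t
    let μ : ℝ → ℝ := fun x => deriv θ x / θ x
    ∀ x t : ℝ, θ x ≠ 0 →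
      deriv (fun s => v x s) t
        = (1/2) * deriv (deriv (fun y => v y t)) x
          - deriv (fun y => μ y * v y t) x :=
  F1_to_heat_intertwining_general B C u θ hu hθ hheat hODE
end

section
/- Let δ > 1 and let u(x,t) solve the Fokker–Planck equation of the δ-dimensional Bessel process: ∂u/∂t = (1/2)∂²u/∂x² − ∂/∂x(((δ−1)/(2x))·u) on (0,∞) × (0,∞). Suppose θ: (0,∞) → ℝ is twice differentiable, nonvanishing, with θ''(x) = (2C + D/x²)θ(x) where D = ((δ−2)² − 1)/4. Then v(x,t) = θ(x)·x^{−(δ−1)/2}·e^{−Ct}·u(x,t) solves the Fokker–Planck equation ∂v/∂t = (1/2)∂²v/∂x² − ∂/∂x(μ(x)v) with μ(x) = θ'(x)/θ(x). -/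
/-!
Writing `v = g · e^{-Ct} · u` with `g(x) = θ(x) x^{-(δ-1)/2}`, a product rule computation shows
that the forward operator with drift `μ = b + g'/g` applied to `g u` equals
`g · (forward operator with drift b)(u) - (L_b g) · u`, where `L_b = ½ ∂² + b ∂` is the backward
operator. For the Bessel drift `b(x) = (δ-1)/(2x)` the ODE for `θ` says exactly that `g` is an
eigenfunction, `L_b g = C g`, and `b + g'/g = θ'/θ`; the factor `e^{-Ct}` absorbs the eigenvalue.
-/

open Filter Topology

noncomputable section

def kolmogorovForward (b f : ℝ → ℝ) (x : ℝ) : ℝ :=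
  1 / 2 * deriv (deriv f) x - deriv (fun y => b y * f y) x

def kolmogorovBackward (b g : ℝ → ℝ) (x : ℝ) : ℝ :=
  1 / 2 * deriv (deriv g) x + b x * deriv g x

end

section Calculus

variable {𝕜 : Type*} [NontriviallyNormedField 𝕜] {x : 𝕜}

theorem ContDiffAt.eventually_differentiableAt {F : Type*} [NormedAddCommGroup F]
    [NormedSpace 𝕜 F] {f : 𝕜 → F} (h : ContDiffAt 𝕜 2 f x) :
    ∀ᶠ y in 𝓝 x, DifferentiableAt 𝕜 f y :=
  (h.eventually (by simp)).mono fun _ hy => hy.differentiableAt (by simp)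

theorem ContDiffAt.differentiableAt_deriv {F : Type*} [NormedAddCommGroup F]
    [NormedSpace 𝕜 F] {f : 𝕜 → F} (h : ContDiffAt 𝕜 2 f x) :
    DifferentiableAt 𝕜 (deriv f) x :=
  (h.derivWithin (m := 1) (by norm_num)).differentiableAt (by simp)

theorem deriv_deriv_mul_s12 {g f : 𝕜 → 𝕜} (hg : ContDiffAt 𝕜 2 g x) (hf : ContDiffAt 𝕜 2 f x) :
    deriv (deriv fun y => g y * f y) x
      = deriv (deriv g) x * f x + 2 * (deriv g x * deriv f x) + g x * deriv (deriv f) x := by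
  have hderiv : deriv (fun y => g y * f y) =ᶠ[𝓝 x] fun y => deriv g y * f y + g y * deriv f y := by
    filter_upwards [hg.eventually_differentiableAt, hf.eventually_differentiableAt] with y hgy hfy
    exact deriv_mul hgy hfy
  have hg' := (hg.differentiableAt (by simp)).hasDerivAt
  have hf' := (hf.differentiableAt (by simp)).hasDerivAt
  have hderiv' : HasDerivAt (fun y => deriv g y * f y + g y * deriv f y)
      (deriv (deriv g) x * f x + deriv g x * deriv f x
        + (deriv g x * deriv f x + g x * deriv (deriv f) x)) x :=
    (hg.differentiableAt_deriv.hasDerivAt.mul hf').add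
      (hg'.mul hf.differentiableAt_deriv.hasDerivAt)
  rw [hderiv.deriv_eq, hderiv'.deriv]
  ring

end Calculus

section Slices

variable {𝕜 E E' F : Type*} [NontriviallyNormedField 𝕜] [NormedAddCommGroup E]
  [NormedSpace 𝕜 E] [NormedAddCommGroup E'] [NormedSpace 𝕜 E'] [NormedAddCommGroup F]
  [NormedSpace 𝕜 F] {n : WithTop ℕ∞} {u : E → E' → F} {x : E} {t : E'}

theorem ContDiffAt.uncurry_left (h : ContDiffAt 𝕜 n (Function.uncurry u) (x, t)) :
    ContDiffAt 𝕜 n (fun y => u y t) x :=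
  h.comp x (contDiffAt_id.prodMk contDiffAt_const)

theorem ContDiffAt.uncurry_right (h : ContDiffAt 𝕜 n (Function.uncurry u) (x, t)) :
    ContDiffAt 𝕜 n (fun s => u x s) t :=
  h.comp t (contDiffAt_const.prodMk contDiffAt_id)

end Slices

theorem kolmogorovForward_mul {b μ g f : ℝ → ℝ} {x : ℝ} (hb : DifferentiableAt ℝ b x)
    (hg : ContDiffAt ℝ 2 g x) (hf : ContDiffAt ℝ 2 f x)
    (hμ : ∀ᶠ y in 𝓝 x, μ y * g y = b y * g y + deriv g y) :
    kolmogorovForward μ (fun y => g y * f y) x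
      = g x * kolmogorovForward b f x - kolmogorovBackward b g x * f x := by
  have hflux : (fun y => μ y * (g y * f y)) =ᶠ[𝓝 x] fun y => (b y * g y + deriv g y) * f y := by
    filter_upwards [hμ] with y hy
    rw [← hy, mul_assoc]
  have hg' := (hg.differentiableAt (by simp)).hasDerivAt
  have hf' := (hf.differentiableAt (by simp)).hasDerivAt
  have hflux' : HasDerivAt (fun y => (b y * g y + deriv g y) * f y)
      ((deriv b x * g x + b x * deriv g x + deriv (deriv g) x) * f x
        + (b x * g x + deriv g x) * deriv f x) x :=
    ((hb.hasDerivAt.mul hg').add hg.differentiableAt_deriv.hasDerivAt).mul hf'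
  have hbf : HasDerivAt (fun y => b y * f y) (deriv b x * f x + b x * deriv f x) x :=
    hb.hasDerivAt.mul hf'
  unfold kolmogorovForward kolmogorovBackward
  rw [deriv_deriv_mul_s12 hg hf, hflux.deriv_eq, hflux'.deriv, hbf.deriv]
  ring

theorem deriv_const_mul_exp_mul {h : ℝ → ℝ} {t : ℝ} (a C : ℝ) (hh : DifferentiableAt ℝ h t) :
    deriv (fun s => a * Real.exp (-C * s) * h s) t
      = a * Real.exp (-C * t) * (deriv h t - C * h t) := by
  have hexp : HasDerivAt (fun s => Real.exp (-C * s)) (Real.exp (-C * t) * -C) t := by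
    simpa using ((hasDerivAt_id t).const_mul (-C)).exp
  have hprod : HasDerivAt (fun s => a * Real.exp (-C * s) * h s)
      (a * (Real.exp (-C * t) * -C) * h t + a * Real.exp (-C * t) * deriv h t) t :=
    (hexp.const_mul a).mul hh.hasDerivAt
  rw [hprod.deriv]
  ring

section BesselGroundState

variable {θ : ℝ → ℝ} {δ c x : ℝ}

theorem hasDerivAt_mul_rpow_mul {θ' e : ℝ} (hθ : HasDerivAt θ θ' x) (hx : 0 < x) :
    HasDerivAt (fun y => θ y * y ^ e * c) ((θ' + e / x * θ x) * x ^ e * c) x := by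
  refine ((hθ.mul (Real.hasStrictDerivAt_rpow_const_of_ne hx.ne' e).hasDerivAt).mul_const
    c).congr_deriv ?_
  rw [Real.rpow_sub_one hx.ne']
  field_simp

theorem bessel_drift_mul_add_deriv (hθ : DifferentiableAt ℝ θ x) (hx : 0 < x) :
    (δ - 1) / (2 * x) * (θ x * x ^ (-(δ - 1) / 2) * c)
        + deriv (fun y => θ y * y ^ (-(δ - 1) / 2) * c) x
      = deriv θ x * x ^ (-(δ - 1) / 2) * c := by
  rw [(hasDerivAt_mul_rpow_mul hθ.hasDerivAt hx).deriv]
  field_simp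
  ring

-- With `e = -(δ-1)/2` the ODE constant is `((δ-2)^2-1)/4 = e(e+1)`, the coefficient produced
-- by conjugating `½ ∂² - (e/x) ∂` with `x^e`.
theorem kolmogorovBackward_bessel_mul_rpow {C : ℝ} (hθ : ContDiffAt ℝ 2 θ x) (hx : 0 < x)
    (hODE : deriv (deriv θ) x = (2 * C + ((δ - 2) ^ 2 - 1) / 4 / x ^ 2) * θ x) :
    kolmogorovBackward (fun y => (δ - 1) / (2 * y)) (fun y => θ y * y ^ (-(δ - 1) / 2) * c) x
      = C * (θ x * x ^ (-(δ - 1) / 2) * c) := by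
  have hθ' := (hθ.differentiableAt (by simp)).hasDerivAt
  have hderiv : deriv (fun y => θ y * y ^ (-(δ - 1) / 2) * c)
      =ᶠ[𝓝 x] fun y => (deriv θ y + -(δ - 1) / 2 / y * θ y) * y ^ (-(δ - 1) / 2) * c := by
    filter_upwards [hθ.eventually_differentiableAt, lt_mem_nhds hx] with y hθy hy
    exact (hasDerivAt_mul_rpow_mul hθy.hasDerivAt hy).deriv
  have hΘ : HasDerivAt (fun y => deriv θ y + -(δ - 1) / 2 / y * θ y)
      (deriv (deriv θ) x + (-(δ - 1) / 2 * -(x ^ 2)⁻¹ * θ x + -(δ - 1) / 2 / x * deriv θ x)) x := by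
    have hinv := ((hasDerivAt_inv hx.ne').const_mul (-(δ - 1) / 2)).mul hθ'
    simp only [← div_eq_mul_inv] at hinv
    exact hθ.differentiableAt_deriv.hasDerivAt.add hinv
  unfold kolmogorovBackward
  rw [hderiv.deriv_eq, (hasDerivAt_mul_rpow_mul hΘ hx).deriv,
    (hasDerivAt_mul_rpow_mul hθ' hx).deriv, hODE]
  field_simp
  ring

end BesselGroundState

theorem F3_to_bessel_intertwining_general
    (δ C : ℝ)
    (u : ℝ → ℝ → ℝ) (θ : ℝ → ℝ)
    (hu : ContDiffOn ℝ 2 (Function.uncurry u) (Set.Ioi 0 ×ˢ Set.Ioi 0))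
    (hθ : ContDiffOn ℝ 2 θ (Set.Ioi 0))
    (hθ0 : ∀ x : ℝ, 0 < x → θ x ≠ 0)
    (hODE : ∀ x : ℝ, 0 < x →
      deriv (deriv θ) x = (2 * C + ((δ - 2) ^ 2 - 1) / 4 / x ^ 2) * θ x)
    (hbessel : ∀ x t : ℝ, 0 < x → 0 < t →
      deriv (fun s => u x s) t
        = (1/2) * deriv (deriv (fun y => u y t)) x
          - deriv (fun y => (δ - 1) / (2 * y) * u y t) x) :
    let v : ℝ → ℝ → ℝ := fun x t =>
      θ x * x ^ (-(δ - 1) / 2) * Real.exp (-C * t) * u x t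
    let μ : ℝ → ℝ := fun x => deriv θ x / θ x
    ∀ x t : ℝ, 0 < x → 0 < t →
      deriv (fun s => v x s) t
        = (1/2) * deriv (deriv (fun y => v y t)) x
          - deriv (fun y => μ y * v y t) x := by
  intro v μ x t hx ht
  set b : ℝ → ℝ := fun y => (δ - 1) / (2 * y)
  set g : ℝ → ℝ := fun y => θ y * y ^ (-(δ - 1) / 2) * Real.exp (-C * t)
  have hθx : ContDiffAt ℝ 2 θ x := hθ.contDiffAt (Ioi_mem_nhds hx)
  have hu_xt : ContDiffAt ℝ 2 (Function.uncurry u) (x, t) :=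
    hu.contDiffAt (prod_mem_nhds (Ioi_mem_nhds hx) (Ioi_mem_nhds ht))
  have hu_time : DifferentiableAt ℝ (fun s => u x s) t :=
    hu_xt.uncurry_right.differentiableAt (by simp)
  have hg : ContDiffAt ℝ 2 g x :=
    (hθx.mul (Real.contDiffAt_rpow_const_of_ne hx.ne')).mul contDiffAt_const
  have hb : DifferentiableAt ℝ b x := by fun_prop (disch := positivity)
  have hμ : ∀ᶠ y in 𝓝 x, μ y * g y = b y * g y + deriv g y := by
    filter_upwards [Ioi_mem_nhds hx] with y hy
    have hθy := (hθ.contDiffAt (Ioi_mem_nhds hy)).differentiableAt (by simp)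
    rw [bessel_drift_mul_add_deriv hθy hy]
    simp only [μ, g]
    field_simp [hθ0 y hy]
  calc deriv (fun s => v x s) t
      = g x * (kolmogorovForward b (fun y => u y t) x - C * u x t) := by
        rw [deriv_const_mul_exp_mul _ _ hu_time, hbessel x t hx ht]
        unfold kolmogorovForward
        ring
    _ = g x * kolmogorovForward b (fun y => u y t) x - kolmogorovBackward b g x * u x t := by
        rw [kolmogorovBackward_bessel_mul_rpow hθx hx (hODE x hx)]
        ring
    _ = kolmogorovForward μ (fun y => g y * u y t) x :=
        (kolmogorovForward_mul hb hg hu_xt.uncurry_left hμ).symm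

/-- Intertwining of the family F₃ Fokker–Planck equation with that of the
δ-dimensional Bessel process: v(x,t) = θ(x) x^{−(δ−1)/2} e^{−Ct} u(x,t). -/
theorem F3_to_bessel_intertwining
    (δ C : ℝ) (hδ : 1 < δ)
    (u : ℝ → ℝ → ℝ) (θ : ℝ → ℝ)
    (hu : ContDiffOn ℝ 2 (Function.uncurry u) (Set.Ioi 0 ×ˢ Set.Ioi 0))
    (hθ : ContDiffOn ℝ 2 θ (Set.Ioi 0))
    (hθ0 : ∀ x : ℝ, 0 < x → θ x ≠ 0)
    (hODE : ∀ x : ℝ, 0 < x →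
      deriv (deriv θ) x = (2 * C + ((δ - 2) ^ 2 - 1) / 4 / x ^ 2) * θ x)
    (hbessel : ∀ x t : ℝ, 0 < x → 0 < t →
      deriv (fun s => u x s) t
        = (1/2) * deriv (deriv (fun y => u y t)) x
          - deriv (fun y => (δ - 1) / (2 * y) * u y t) x) :
    let v : ℝ → ℝ → ℝ := fun x t =>
      θ x * x ^ (-(δ - 1) / 2) * Real.exp (-C * t) * u x t
    let μ : ℝ → ℝ := fun x => deriv θ x / θ x
    ∀ x t : ℝ, 0 < x → 0 < t →
      deriv (fun s => v x s) t
        = (1/2) * deriv (deriv (fun y => v y t)) x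
          - deriv (fun y => μ y * v y t) x :=
  F3_to_bessel_intertwining_general δ C u θ hu hθ hθ0 hODE hbessel
end
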